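/- Let q be an odd prime power, π = Ps(χ,χ⁻¹) an irreducible principal series representation of PGL₂(F_q) with unit invariant vectors v_H for the split torus H and v_{K_a} for the nonsplit torus K_a = ⟨[[1,αa²],[1,1]]⟩ (for a ∈ F_q^× such that this element has order q+1). Then ⟨v_H, v_{K_a}⟩ = χ(a)·⟨v_H, v_{K_1}⟩, where K_1 = ⟨[[1,α],[1,1]]⟩. -/

import Mathlib

open Matrix

noncomputable section

variable (F : Type) [Field F] [Fintype F] [DecidableEq F]

/-- The Bruhat basis vector `f` of the principal series `Ps(χ, χ⁻¹)` of `PGL₂(F_q)` in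
the induced model (`f(bg) = χ(b₀₀/b₁₁) f(g)` for upper triangular `b`), supported on the
Borel subgroup and normalized by `f(1) = 1`. -/
def brF (χ : MulChar F ℂ) (g : GL (Fin 2) F) : ℂ :=
  if (g : Matrix (Fin 2) (Fin 2) F) 1 0 = 0 then
    χ ((g : Matrix (Fin 2) (Fin 2) F) 0 0 / (g : Matrix (Fin 2) (Fin 2) F) 1 1)
  else 0

/-- The Bruhat basis vector `f_λ` of the principal series `Ps(χ, χ⁻¹)` of `PGL₂(F_q)`,
supported on the Borel coset of `w·[[1,λ],[0,1]]` (where `w = [[0,1],[1,0]]`) and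
normalized by `f_λ(w·[[1,λ],[0,1]]) = 1`. -/
def brFl (χ : MulChar F ℂ) (l : F) (g : GL (Fin 2) F) : ℂ :=
  if (g : Matrix (Fin 2) (Fin 2) F) 1 0 ≠ 0 ∧
      (g : Matrix (Fin 2) (Fin 2) F) 1 1 / (g : Matrix (Fin 2) (Fin 2) F) 1 0 = l then
    χ (-(g : Matrix (Fin 2) (Fin 2) F).det / ((g : Matrix (Fin 2) (Fin 2) F) 1 0) ^ 2)
  else 0

/-- The standard `G`-invariant inner product on the induced model of the principal
series, normalized so that the Bruhat basis `{f, f_λ}` is orthonormal (each basis vector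
is supported on a single Borel coset, of cardinality `q(q-1)²`, with values of modulus
one). -/
def psInner (φ ψ' : GL (Fin 2) F → ℂ) : ℂ :=
  ((Fintype.card F * (Fintype.card F - 1) ^ 2 : ℕ) : ℂ)⁻¹ *
    ∑ g : GL (Fin 2) F, φ g * (starRingEnd ℂ) (ψ' g)

/-- The `H`-invariant unit vector `v_H = (1/|H|) ∑_{λ≠0} χ⁻¹(λ) f_λ` for the split torus
`H`. -/
def psVH (χ : MulChar F ℂ) : GL (Fin 2) F → ℂ := fun g =>
  ((Fintype.card F - 1 : ℕ) : ℂ)⁻¹ * ∑ l : Fˣ, χ⁻¹ (l : F) * brFl F χ (l : F) g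

/-- The `K`-invariant unit vector `v_K = (1/|K|)(f + ∑_λ χ(1/(α-λ²)) f_λ)` for the
non-split torus `K = ⟨[[1,α],[1,1]]⟩`. -/
def psVK (χ : MulChar F ℂ) (α : F) : GL (Fin 2) F → ℂ := fun g =>
  ((Fintype.card F + 1 : ℕ) : ℂ)⁻¹ *
    (brF F χ g + ∑ l : F, χ ((α - l ^ 2)⁻¹) * brFl F χ l g)

/-!
Right translation by `d = diag(1, a)` preserves the inner product. It sends `f_λ` to
`χ(a) f_{λ/a}`, a shift that the weights `χ⁻¹(λ)` absorb, so it fixes `v_H`; and it sends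
`v_{K_a}` to `χ(a)⁻¹ v_{K_1}`, since on the coefficients it is the substitution `λ ↦ λa` in
`χ(1/(αa² - λ²)) = χ(a)⁻² χ(1/(α - λ²))`. Hence
`⟨v_H, v_{K_a}⟩ = conj(χ(a)⁻¹) ⟨v_H, v_{K_1}⟩ = χ(a) ⟨v_H, v_{K_1}⟩`.
-/

lemma MulChar.apply_inv_mul_apply {R R' : Type*} [CommMonoid R] [CommMonoidWithZero R']
    (χ : MulChar R R') (u : Rˣ) : χ ↑u⁻¹ * χ u = 1 := by
  rw [← map_mul, ← Units.val_mul, inv_mul_cancel, Units.val_one, map_one]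

namespace Matrix.GeneralLinearGroup

variable {R : Type*} [CommRing R]

def diagOneUnit (u : Rˣ) : GL (Fin 2) R :=
  ⟨!![1, 0; 0, (u : R)], !![1, 0; 0, ((u⁻¹ : Rˣ) : R)],
    by simp [Matrix.one_fin_two],
    by simp [Matrix.one_fin_two]⟩

variable (g : GL (Fin 2) R) (u : Rˣ)

@[simp]
lemma mul_diagOneUnit_apply_zero_zero :
    ((g * diagOneUnit u : GL (Fin 2) R) : Matrix (Fin 2) (Fin 2) R) 0 0 =
      (g : Matrix (Fin 2) (Fin 2) R) 0 0 := by
  simp [diagOneUnit, Matrix.mul_apply, Fin.sum_univ_two]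

@[simp]
lemma mul_diagOneUnit_apply_one_zero :
    ((g * diagOneUnit u : GL (Fin 2) R) : Matrix (Fin 2) (Fin 2) R) 1 0 =
      (g : Matrix (Fin 2) (Fin 2) R) 1 0 := by
  simp [diagOneUnit, Matrix.mul_apply, Fin.sum_univ_two]

@[simp]
lemma mul_diagOneUnit_apply_one_one :
    ((g * diagOneUnit u : GL (Fin 2) R) : Matrix (Fin 2) (Fin 2) R) 1 1 =
      (g : Matrix (Fin 2) (Fin 2) R) 1 1 * u := by
  simp [diagOneUnit, Matrix.mul_apply, Fin.sum_univ_two]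

@[simp]
lemma det_mul_diagOneUnit :
    ((g * diagOneUnit u : GL (Fin 2) R) : Matrix (Fin 2) (Fin 2) R).det =
      (g : Matrix (Fin 2) (Fin 2) R).det * u := by
  simp [diagOneUnit, Matrix.det_fin_two_of]

end Matrix.GeneralLinearGroup

open Matrix.GeneralLinearGroup

lemma brFl_mul_diagOneUnit (E : Type) [Field E] [DecidableEq E] (χ : MulChar E ℂ) (l : E)
    (u : Eˣ) (g : GL (Fin 2) E) :
    brFl E χ l (g * diagOneUnit u) = χ u * brFl E χ (l / u) g := by
  simp only [brFl, mul_diagOneUnit_apply_one_zero, mul_diagOneUnit_apply_one_one,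
    det_mul_diagOneUnit]
  set M : Matrix (Fin 2) (Fin 2) E := (g : Matrix (Fin 2) (Fin 2) E)
  by_cases h : M 1 0 = 0
  · simp [h]
  have hcoset : M 1 1 * u / M 1 0 = l ↔ M 1 1 / M 1 0 = l / u := by
    rw [eq_div_iff u.ne_zero, div_mul_eq_mul_div]
  simp only [ne_eq, h, not_false_eq_true, true_and, hcoset]
  split_ifs
  · rw [← map_mul]
    congr 1
    ring
  · simp

lemma brF_mul_diagOneUnit (E : Type) [Field E] [DecidableEq E] (χ : MulChar E ℂ) (u : Eˣ)
    (g : GL (Fin 2) E) :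
    brF E χ (g * diagOneUnit u) = χ ↑u⁻¹ * brF E χ g := by
  simp only [brF, mul_diagOneUnit_apply_zero_zero, mul_diagOneUnit_apply_one_zero,
    mul_diagOneUnit_apply_one_one]
  split_ifs
  · rw [← map_mul, Units.val_inv_eq_inv_val, div_mul_eq_div_div, div_eq_mul_inv _ (u : E),
      mul_comm]
  · simp

lemma psVH_mul_diagOneUnit (χ : MulChar F ℂ) (u : Fˣ) (g : GL (Fin 2) F) :
    psVH F χ (g * diagOneUnit u) = psVH F χ g := by
  unfold psVH
  congr 1
  rw [← Equiv.sum_comp (Equiv.mulRight u)]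
  refine Fintype.sum_congr _ _ fun l => ?_
  rw [Equiv.coe_mulRight, brFl_mul_diagOneUnit, Units.val_mul, mul_div_cancel_right₀ _ u.ne_zero,
    map_mul, MulChar.inv_apply' χ (u : F), ← Units.val_inv_eq_inv_val]
  linear_combination χ⁻¹ (l : F) * brFl F χ l g * χ.apply_inv_mul_apply u

lemma psVK_mul_diagOneUnit (χ : MulChar F ℂ) (α : F) (u : Fˣ) (g : GL (Fin 2) F) :
    psVK F χ (α * u ^ 2) (g * diagOneUnit u) = χ ↑u⁻¹ * psVK F χ α g := by
  have hsummand (l : F) :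
      χ ((α * u ^ 2 - (l * u) ^ 2)⁻¹) * brFl F χ (l * u) (g * diagOneUnit u) =
        χ ↑u⁻¹ * (χ ((α - l ^ 2)⁻¹) * brFl F χ l g) := by
    rw [brFl_mul_diagOneUnit, mul_div_cancel_right₀ _ u.ne_zero,
      show (α * u ^ 2 - (l * u) ^ 2)⁻¹ = ↑u⁻¹ * ↑u⁻¹ * (α - l ^ 2)⁻¹ by
        rw [Units.val_inv_eq_inv_val]; field_simp]
    simp only [map_mul]
    linear_combination
      χ ↑u⁻¹ * χ (α - l ^ 2)⁻¹ * brFl F χ l g * χ.apply_inv_mul_apply u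
  unfold psVK
  rw [brF_mul_diagOneUnit, ← Equiv.sum_comp (Equiv.mulRight₀ (u : F) u.ne_zero)]
  simp only [Equiv.mulRight₀_apply, hsummand, ← Finset.mul_sum]
  ring

lemma psInner_comp_mul_right (φ ψ : GL (Fin 2) F → ℂ) (h : GL (Fin 2) F) :
    psInner F (fun g => φ (g * h)) (fun g => ψ (g * h)) = psInner F φ ψ := by
  unfold psInner
  exact congrArg _ (Equiv.sum_comp (Equiv.mulRight h) fun g => φ g * (starRingEnd ℂ) (ψ g))

lemma psInner_const_mul_right (φ ψ : GL (Fin 2) F → ℂ) (c : ℂ) :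
    psInner F φ (fun g => c * ψ g) = (starRingEnd ℂ) c * psInner F φ ψ := by
  simp only [psInner, map_mul, Finset.mul_sum]
  exact Fintype.sum_congr _ _ fun g => by ring

theorem stmt_18 (χ : MulChar F ℂ) (α : F) (a : F) (ha : a ≠ 0) :
    psInner F (psVH F χ) (psVK F χ (α * a ^ 2)) =
      χ a * psInner F (psVH F χ) (psVK F χ α) := by
  set u := Units.mk0 a ha
  have hconj : (starRingEnd ℂ) (χ ↑u⁻¹) = χ a := by
    rw [starRingEnd_apply, MulChar.star_apply', MulChar.inv_apply', Units.val_inv_eq_inv_val,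
      inv_inv, Units.val_mk0]
  calc psInner F (psVH F χ) (psVK F χ (α * a ^ 2))
      = psInner F (fun g => psVH F χ (g * diagOneUnit u))
          (fun g => psVK F χ (α * (u : F) ^ 2) (g * diagOneUnit u)) :=
        (psInner_comp_mul_right F _ _ _).symm
    _ = psInner F (psVH F χ) (fun g => χ ↑u⁻¹ * psVK F χ α g) := by
        simp only [psVH_mul_diagOneUnit, psVK_mul_diagOneUnit]
    _ = χ a * psInner F (psVH F χ) (psVK F χ α) := by
        rw [psInner_const_mul_right, hconj]

end
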